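/- (Fundamental Theorem of Statistical Mechanics, classical version.) Let (X, μ) be a σ-finite measure space (the system A) and, for i = 1, …, m, let (Y_i, ν_i) be σ-finite measure spaces (the heat reservoirs B_i) with measurable Hamiltonians H_i : Y_i → ℝ, inverse temperatures β_i > 0, finite nonzero partition functions Z_i = ∫ e^{-β_i H_i} dν_i, and canonical densities g_i = Z_i⁻¹ e^{-β_i H_i}. Let f_A be a probability density on X, let the initial joint density on W = X × Y_1 × ⋯ × Y_m (with the product measure) be the product f₀(x, y_1, …, y_m) = f_A(x) g_1(y_1) ⋯ g_m(y_m), let Φ : W → W be a measure-preserving measurable equivalence, and let f₁ = f₀ ∘ Φ⁻¹ be the final joint density, with marginal densities f_A' on X and g_i' on Y_i. Define the expected heat gained by the system from reservoir i as Q_i = ∫ H_i g_i dν_i - ∫ H_i g_i' dν_i. Then, assuming all the entropy integrals S[f_A], S[f_A'], S[g_i], S[g_i'], S[f₁] and the energy integrals ∫ H_i g_i dν_i, ∫ H_i g_i' dν_i are finite, ∑_{i=1}^m β_i Q_i ≤ S[f_A'] - S[f_A]. -/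

import Mathlib

/-!
The joint entropy is invariant under the measure-preserving evolution `Φ`, and for the initial
product density it splits as `S[f_A] + ∑ S[g_i]`. By Gibbs' inequality, the final joint entropy
is at most the cross-entropy against the product `f_A' ⊗ g_1 ⊗ ⋯ ⊗ g_m` of the final marginal
of `A` with the initial reservoir densities, and this cross-entropy splits along the marginals as
`S[f_A'] - ∑ ∫ g_i' log g_i`. Since `log g_i = -log Z_i - β_i H_i` is affine in the energy,
`S[g_i]` and `-∫ g_i' log g_i` differ by exactly `β_i Q_i`.
-/

open MeasureTheory Real Set

structure IsProbabilityDensity {α : Type*} [MeasurableSpace α] (μ : Measure α) (f : α → ℝ) :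
    Prop where
  measurable : Measurable f
  nonneg : ∀ x, 0 ≤ f x
  integral_eq_one : ∫ x, f x ∂μ = 1

namespace IsProbabilityDensity

variable {α : Type*} [MeasurableSpace α] {μ : Measure α} {f : α → ℝ}

theorem integrable (hf : IsProbabilityDensity μ f) : Integrable f μ :=
  Integrable.of_integral_ne_zero (by rw [hf.integral_eq_one]; exact one_ne_zero)

theorem comp_measurePreserving {β : Type*} [MeasurableSpace β] {ν : Measure β} {e : β → α}
    (hf : IsProbabilityDensity μ f) (he : MeasurePreserving e ν μ) (he' : MeasurableEmbedding e) :
    IsProbabilityDensity ν (fun y => f (e y)) where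
  measurable := hf.measurable.comp he.measurable
  nonneg y := hf.nonneg (e y)
  integral_eq_one := by rw [he.integral_comp he' f, hf.integral_eq_one]

end IsProbabilityDensity

theorem integral_mul_log_comp_measurePreserving {α β : Type*} [MeasurableSpace α]
    [MeasurableSpace β] {μ : Measure α} {ν : Measure β} {e : β → α} (he : MeasurePreserving e ν μ)
    (he' : MeasurableEmbedding e) (f : α → ℝ) :
    ∫ y, f (e y) * log (f (e y)) ∂ν = ∫ x, f x * log (f x) ∂μ :=
  he.integral_comp he' fun x => f x * log (f x)

theorem mul_log_sub_mul_log_le {p q : ℝ} (hp : 0 ≤ p) (hq : 0 ≤ q) (hqp : q = 0 → p = 0) :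
    p * log q - p * log p ≤ q - p := by
  rcases hp.eq_or_lt with rfl | hp
  · simpa using hq
  have hq : 0 < q := hq.lt_of_ne fun h => hp.ne' (hqp h.symm)
  calc p * log q - p * log p = p * log (q / p) := by rw [log_div hq.ne' hp.ne']; ring
    _ ≤ p * (q / p - 1) := mul_le_mul_of_nonneg_left (log_le_sub_one_of_pos (div_pos hq hp)) hp.le
    _ = q - p := by field_simp

/-- Gibbs' inequality. -/
theorem integral_mul_log_le_integral_mul_log {α : Type*} [MeasurableSpace α] {μ : Measure α}
    {p q : α → ℝ} (hp : IsProbabilityDensity μ p) (hq : IsProbabilityDensity μ q)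
    (hpq : ∀ᵐ a ∂μ, q a = 0 → p a = 0)
    (hplp : Integrable (fun a => p a * log (p a)) μ)
    (hplq : Integrable (fun a => p a * log (q a)) μ) :
    ∫ a, p a * log (q a) ∂μ ≤ ∫ a, p a * log (p a) ∂μ := by
  have := integral_mono_ae (f := fun a => p a * log (q a) - p a * log (p a))
    (g := fun a => q a - p a) (hplq.sub hplp) (hq.integrable.sub hp.integrable)
    (hpq.mono fun a ha => mul_log_sub_mul_log_le (hp.nonneg a) (hq.nonneg a) ha)
  rw [integral_sub hplq hplp, integral_sub hq.integrable hp.integrable, hp.integral_eq_one,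
    hq.integral_eq_one] at this
  linarith

section MarginalDensity

variable {W α : Type*} [MeasurableSpace W] [MeasurableSpace α]

theorem integral_withDensity_ofReal {ρ : Measure W} {p : W → ℝ} (hpm : Measurable p)
    (hp0 : ∀ w, 0 ≤ p w) (φ : W → ℝ) :
    ∫ w, φ w ∂(ρ.withDensity fun w => ENNReal.ofReal (p w)) = ∫ w, p w * φ w ∂ρ := by
  rw [integral_withDensity_eq_integral_toReal_smul hpm.ennreal_ofReal
    (.of_forall fun _ => ENNReal.ofReal_lt_top)]
  simp only [ENNReal.toReal_ofReal (hp0 _), smul_eq_mul]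

theorem integrable_withDensity_ofReal_iff {ρ : Measure W} {p : W → ℝ} (hpm : Measurable p)
    (hp0 : ∀ w, 0 ≤ p w) {φ : W → ℝ} :
    Integrable φ (ρ.withDensity fun w => ENNReal.ofReal (p w)) ↔
      Integrable (fun w => p w * φ w) ρ := by
  rw [integrable_withDensity_iff_integrable_smul' hpm.ennreal_ofReal
    (.of_forall fun _ => ENNReal.ofReal_lt_top)]
  simp only [ENNReal.toReal_ofReal (hp0 _), smul_eq_mul]

structure IsMarginalDensity (ρ : Measure W) (p : W → ℝ) (pr : W → α) (ν : Measure α)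
    (q : α → ℝ) : Prop where
  measurable : Measurable q
  nonneg : ∀ x, 0 ≤ q x
  map_withDensity_eq :
    (ρ.withDensity fun w => ENNReal.ofReal (p w)).map pr =
      ν.withDensity fun x => ENNReal.ofReal (q x)

variable {ρ : Measure W} {p : W → ℝ} {pr : W → α} {ν : Measure α} {q : α → ℝ}

namespace IsMarginalDensity

theorem integral_comp_mul (h : IsMarginalDensity ρ p pr ν q) (hpr : Measurable pr)
    (hpm : Measurable p) (hp0 : ∀ w, 0 ≤ p w) {φ : α → ℝ} (hφ : Measurable φ) :
    ∫ w, p w * φ (pr w) ∂ρ = ∫ x, q x * φ x ∂ν := by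
  rw [← integral_withDensity_ofReal hpm hp0, ← integral_withDensity_ofReal h.measurable h.nonneg,
    ← h.map_withDensity_eq, integral_map hpr.aemeasurable hφ.aestronglyMeasurable]

theorem integrable_comp_mul_iff (h : IsMarginalDensity ρ p pr ν q) (hpr : Measurable pr)
    (hpm : Measurable p) (hp0 : ∀ w, 0 ≤ p w) {φ : α → ℝ} (hφ : Measurable φ) :
    Integrable (fun w => p w * φ (pr w)) ρ ↔ Integrable (fun x => q x * φ x) ν := by
  rw [← integrable_withDensity_ofReal_iff hpm hp0, ← integrable_withDensity_ofReal_iff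
    h.measurable h.nonneg, ← h.map_withDensity_eq,
    integrable_map_measure hφ.aestronglyMeasurable hpr.aemeasurable]
  rfl

theorem isProbabilityDensity (h : IsMarginalDensity ρ p pr ν q) (hpr : Measurable pr)
    (hp : IsProbabilityDensity ρ p) : IsProbabilityDensity ν q where
  measurable := h.measurable
  nonneg := h.nonneg
  integral_eq_one := by
    simpa [hp.integral_eq_one] using
      (h.integral_comp_mul hpr hp.measurable hp.nonneg measurable_const (φ := fun _ => 1)).symm

theorem ae_eq_zero_of_eq_zero (h : IsMarginalDensity ρ p pr ν q) (hpr : Measurable pr)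
    (hpm : Measurable p) (hp0 : ∀ w, 0 ≤ p w) : ∀ᵐ w ∂ρ, q (pr w) = 0 → p w = 0 := by
  have hN : MeasurableSet {x | q x = 0} := h.measurable (measurableSet_singleton 0)
  have hnull : ρ.withDensity (fun w => ENNReal.ofReal (p w)) (pr ⁻¹' {x | q x = 0}) = 0 := by
    rw [← Measure.map_apply hpr hN, h.map_withDensity_eq,
      withDensity_apply_eq_zero' h.measurable.ennreal_ofReal.aemeasurable]
    convert measure_empty (μ := ν)
    ext x
    simpa using fun hx : 0 < q x => hx.ne'
  rw [withDensity_apply_eq_zero' hpm.ennreal_ofReal.aemeasurable,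
    measure_eq_zero_iff_ae_notMem] at hnull
  filter_upwards [hnull] with w hw hqw
  simp only [mem_inter_iff, mem_ofPred_eq, mem_preimage, hqw, and_true, ENNReal.ofReal_eq_zero,
    not_not] at hw
  exact le_antisymm hw (hp0 w)

end IsMarginalDensity

theorem isMarginalDensity_of_setIntegral_eq [SigmaFinite ν] (hpr : Measurable pr)
    (hp : IsProbabilityDensity ρ p) (hqm : Measurable q) (hq0 : ∀ x, 0 ≤ q x)
    (h : ∀ s : Set α, MeasurableSet s →
      ∫ x in s, q x ∂ν = ∫ w, s.indicator (fun _ => (1 : ℝ)) (pr w) * p w ∂ρ) :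
    IsMarginalDensity ρ p pr ν q := by
  refine ⟨hqm, hq0, ?_⟩
  -- cut `α` into pieces of finite measure on which `q` is bounded, where the set integrals
  -- in `h` are not junk values
  set s : ℕ → Set α := fun n => spanningSets ν n ∩ {x | q x ≤ n}
  have hs (n : ℕ) : MeasurableSet (s n) :=
    (measurableSet_spanningSets ν n).inter (measurableSet_le hqm measurable_const)
  have hcover : ⋃ n, s n = univ := by
    refine eq_univ_of_forall fun x => mem_iUnion.2 ?_
    obtain ⟨n, hn⟩ := mem_iUnion.1 (iUnion_spanningSets ν ▸ mem_univ x)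
    obtain ⟨k, hk⟩ := exists_nat_ge (q x)
    exact ⟨max n k, monotone_spanningSets ν (le_max_left n k) hn,
      hk.trans (Nat.cast_le.2 (le_max_right n k))⟩
  refine (Measure.ext_iff_of_iUnion_eq_univ hcover).2 fun n => Measure.ext fun t ht => ?_
  have hts : MeasurableSet (t ∩ s n) := ht.inter (hs n)
  have hqi : IntegrableOn q (t ∩ s n) ν := by
    refine Measure.integrableOn_of_bounded (M := n) ?_ hqm.aestronglyMeasurable ?_
    · exact (measure_mono (inter_subset_right.trans inter_subset_left)).trans_lt
        (measure_spanningSets_lt_top ν n) |>.ne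
    · filter_upwards [ae_restrict_mem hts] with x hx
      rw [norm_of_nonneg (hq0 x)]
      exact hx.2.2
  rw [Measure.restrict_apply ht, Measure.restrict_apply ht, Measure.map_apply hpr hts,
    withDensity_apply _ (hpr hts), withDensity_apply _ hts,
    ← ofReal_integral_eq_lintegral_ofReal hqi (.of_forall fun x => hq0 x),
    ← ofReal_integral_eq_lintegral_ofReal hp.integrable.integrableOn (.of_forall hp.nonneg),
    h _ hts, ← integral_indicator (hpr hts)]
  congr 2 with w
  by_cases hw : pr w ∈ t ∩ s n
  · rw [indicator_of_mem (mem_preimage.2 hw), indicator_of_mem hw, one_mul]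
  · rw [indicator_of_notMem (mt mem_preimage.1 hw), indicator_of_notMem hw, zero_mul]

end MarginalDensity

section CrossEntropy

variable {W X ι : Type*} [MeasurableSpace W] [MeasurableSpace X] [Fintype ι] {Y : ι → Type*}
  {ρ : Measure W} {p : W → ℝ} {μ : Measure X} {prX : W → X} {q : X → ℝ} {prY : ∀ i, W → Y i}
  {r g : ∀ i, Y i → ℝ}

theorem mul_log_mul_prod_ae_eq (hq : IsMarginalDensity ρ p prX μ q) (hprX : Measurable prX)
    (hpm : Measurable p) (hp0 : ∀ w, 0 ≤ p w) (hg : ∀ i y, 0 < g i y) :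
    (fun w => p w * log (q (prX w) * ∏ i, g i (prY i w))) =ᵐ[ρ]
      fun w => p w * log (q (prX w)) + ∑ i, p w * log (g i (prY i w)) := by
  filter_upwards [hq.ae_eq_zero_of_eq_zero hprX hpm hp0] with w hw
  by_cases hqw : q (prX w) = 0
  · simp [hw hqw]
  rw [log_mul hqw (Finset.prod_pos fun i _ => hg i _).ne', log_prod fun i _ => (hg i _).ne',
    mul_add, Finset.mul_sum]

variable [∀ i, MeasurableSpace (Y i)] {ν : ∀ i, Measure (Y i)}

theorem integrable_mul_log_mul_prod_of_marginals (hq : IsMarginalDensity ρ p prX μ q)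
    (hr : ∀ i, IsMarginalDensity ρ p (prY i) (ν i) (r i)) (hprX : Measurable prX)
    (hprY : ∀ i, Measurable (prY i)) (hpm : Measurable p) (hp0 : ∀ w, 0 ≤ p w)
    (hgm : ∀ i, Measurable (g i)) (hg : ∀ i y, 0 < g i y)
    (hqlog : Integrable (fun x => q x * log (q x)) μ)
    (hrlog : ∀ i, Integrable (fun y => r i y * log (g i y)) (ν i)) :
    Integrable (fun w => p w * log (q (prX w) * ∏ i, g i (prY i w))) ρ :=
  (integrable_congr (mul_log_mul_prod_ae_eq hq hprX hpm hp0 hg)).2 <|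
    ((hq.integrable_comp_mul_iff hprX hpm hp0 hq.measurable.log).2 hqlog).add <|
      integrable_finsetSum _ fun i _ =>
        ((hr i).integrable_comp_mul_iff (hprY i) hpm hp0 (hgm i).log).2 (hrlog i)

theorem integral_mul_log_mul_prod_of_marginals (hq : IsMarginalDensity ρ p prX μ q)
    (hr : ∀ i, IsMarginalDensity ρ p (prY i) (ν i) (r i)) (hprX : Measurable prX)
    (hprY : ∀ i, Measurable (prY i)) (hpm : Measurable p) (hp0 : ∀ w, 0 ≤ p w)
    (hgm : ∀ i, Measurable (g i)) (hg : ∀ i y, 0 < g i y)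
    (hqlog : Integrable (fun x => q x * log (q x)) μ)
    (hrlog : ∀ i, Integrable (fun y => r i y * log (g i y)) (ν i)) :
    ∫ w, p w * log (q (prX w) * ∏ i, g i (prY i w)) ∂ρ =
      ∫ x, q x * log (q x) ∂μ + ∑ i, ∫ y, r i y * log (g i y) ∂(ν i) := by
  have hrlog' (i : ι) : Integrable (fun w => p w * log (g i (prY i w))) ρ :=
    ((hr i).integrable_comp_mul_iff (hprY i) hpm hp0 (hgm i).log).2 (hrlog i)
  rw [integral_congr_ae (mul_log_mul_prod_ae_eq hq hprX hpm hp0 hg),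
    integral_add ((hq.integrable_comp_mul_iff hprX hpm hp0 hq.measurable.log).2 hqlog)
      (integrable_finsetSum _ fun i _ => hrlog' i),
    integral_finsetSum _ fun i _ => hrlog' i, hq.integral_comp_mul hprX hpm hp0 hq.measurable.log]
  congr 1
  exact Finset.sum_congr rfl fun i _ => (hr i).integral_comp_mul (hprY i) hpm hp0 (hgm i).log

end CrossEntropy

theorem integral_indicator_one_mul {α : Type*} [MeasurableSpace α] {μ : Measure α} {s : Set α}
    (hs : MeasurableSet s) (f : α → ℝ) :
    ∫ x, s.indicator (fun _ => (1 : ℝ)) x * f x ∂μ = ∫ x in s, f x ∂μ := by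
  simp_rw [← indicator_mul_left, one_mul]
  exact integral_indicator hs

section ProductDensity

variable {X ι : Type*} [MeasurableSpace X] [Fintype ι] {Y : ι → Type*}
  [∀ i, MeasurableSpace (Y i)] {μ : Measure X} {ν : ∀ i, Measure (Y i)}
  [SigmaFinite μ] [∀ i, SigmaFinite (ν i)] {f : X → ℝ} {g : ∀ i, Y i → ℝ}

theorem integral_comp_eval_mul_prod [DecidableEq ι] (i : ι) (φ : Y i → ℝ) :
    ∫ y, φ (y i) * ∏ j, g j (y j) ∂(Measure.pi ν) =
      (∫ y, φ y * g i y ∂(ν i)) * ∏ j ∈ {i}ᶜ, ∫ y, g j y ∂(ν j) := by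
  set g' := Function.update g i fun y => φ y * g i y
  have hg' (y : ∀ j, Y j) : φ (y i) * ∏ j, g j (y j) = ∏ j, g' j (y j) := by
    simp_rw [g', Function.apply_update (fun j (ψ : Y j → ℝ) => ψ (y j)),
      Finset.prod_update_of_mem (Finset.mem_univ i), Fintype.prod_eq_mul_prod_compl i,
      Finset.compl_eq_univ_sdiff, mul_assoc]
  simp_rw [hg', integral_fintype_prod_eq_prod, g',
    Function.apply_update (fun j (ψ : Y j → ℝ) => ∫ y, ψ y ∂(ν j)),
    Finset.prod_update_of_mem (Finset.mem_univ i), Finset.compl_eq_univ_sdiff]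

namespace IsProbabilityDensity

theorem prod_pi (hf : IsProbabilityDensity μ f) (hg : ∀ i, IsProbabilityDensity (ν i) (g i)) :
    IsProbabilityDensity (μ.prod (Measure.pi ν)) fun w => f w.1 * ∏ i, g i (w.2 i) where
  measurable := (hf.measurable.comp measurable_fst).mul <| Finset.measurable_prod _ fun i _ =>
    (hg i).measurable.comp measurable_snd.eval
  nonneg w := mul_nonneg (hf.nonneg _) (Finset.prod_nonneg fun i _ => (hg i).nonneg _)
  integral_eq_one := by
    rw [integral_prod_mul f fun y : ∀ i, Y i => ∏ i, g i (y i), integral_fintype_prod_eq_prod,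
      hf.integral_eq_one]
    simp [fun i => (hg i).integral_eq_one]

end IsProbabilityDensity

theorem isMarginalDensity_fst_prod_pi (hf : IsProbabilityDensity μ f)
    (hg : ∀ i, IsProbabilityDensity (ν i) (g i)) :
    IsMarginalDensity (μ.prod (Measure.pi ν)) (fun w => f w.1 * ∏ i, g i (w.2 i)) Prod.fst μ f := by
  refine isMarginalDensity_of_setIntegral_eq measurable_fst (hf.prod_pi hg) hf.measurable
    hf.nonneg fun s hs => ?_
  simp_rw [← mul_assoc]
  rw [integral_prod_mul (fun x => s.indicator (fun _ => (1 : ℝ)) x * f x)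
      fun y : ∀ i, Y i => ∏ i, g i (y i), integral_fintype_prod_eq_prod,
    integral_indicator_one_mul hs]
  simp [fun i => (hg i).integral_eq_one]

theorem isMarginalDensity_eval_prod_pi (hf : IsProbabilityDensity μ f)
    (hg : ∀ i, IsProbabilityDensity (ν i) (g i)) (i : ι) :
    IsMarginalDensity (μ.prod (Measure.pi ν)) (fun w => f w.1 * ∏ i, g i (w.2 i))
      (fun w => w.2 i) (ν i) (g i) := by
  classical
  refine isMarginalDensity_of_setIntegral_eq measurable_snd.eval (hf.prod_pi hg) (hg i).measurable (hg i).nonneg fun s hs => ?_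
  simp_rw [mul_left_comm _ (f _)]
  rw [integral_prod_mul f fun y : ∀ i, Y i => s.indicator (fun _ => (1 : ℝ)) (y i) *
      ∏ i, g i (y i), integral_comp_eval_mul_prod, integral_indicator_one_mul hs,
    hf.integral_eq_one]
  simp [fun i => (hg i).integral_eq_one]

theorem integral_mul_log_prod_pi (hf : IsProbabilityDensity μ f)
    (hg : ∀ i, IsProbabilityDensity (ν i) (g i)) (hgpos : ∀ i y, 0 < g i y)
    (hflog : Integrable (fun x => f x * log (f x)) μ)
    (hglog : ∀ i, Integrable (fun y => g i y * log (g i y)) (ν i)) :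
    ∫ w, (f w.1 * ∏ i, g i (w.2 i)) * log (f w.1 * ∏ i, g i (w.2 i)) ∂(μ.prod (Measure.pi ν)) =
      ∫ x, f x * log (f x) ∂μ + ∑ i, ∫ y, g i y * log (g i y) ∂(ν i) :=
  integral_mul_log_mul_prod_of_marginals (isMarginalDensity_fst_prod_pi hf hg)
    (isMarginalDensity_eval_prod_pi hf hg) measurable_fst
    (fun _ => measurable_snd.eval) (hf.prod_pi hg).measurable
    (hf.prod_pi hg).nonneg (fun i => (hg i).measurable) hgpos hflog hglog

theorem integral_mul_log_ge_of_marginals {p : X × (∀ i, Y i) → ℝ} {q : X → ℝ}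
    {r : ∀ i, Y i → ℝ} (hp : IsProbabilityDensity (μ.prod (Measure.pi ν)) p)
    (hq : IsMarginalDensity (μ.prod (Measure.pi ν)) p Prod.fst μ q)
    (hr : ∀ i, IsMarginalDensity (μ.prod (Measure.pi ν)) p (fun w => w.2 i) (ν i) (r i))
    (hg : ∀ i, IsProbabilityDensity (ν i) (g i)) (hgpos : ∀ i y, 0 < g i y)
    (hplog : Integrable (fun w => p w * log (p w)) (μ.prod (Measure.pi ν)))
    (hqlog : Integrable (fun x => q x * log (q x)) μ)
    (hrlog : ∀ i, Integrable (fun y => r i y * log (g i y)) (ν i)) :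
    ∫ x, q x * log (q x) ∂μ + ∑ i, ∫ y, r i y * log (g i y) ∂(ν i) ≤
      ∫ w, p w * log (p w) ∂(μ.prod (Measure.pi ν)) := by
  -- Gibbs' inequality against the product of `q` with the `g i`
  have hqg := (hq.isProbabilityDensity measurable_fst hp).prod_pi hg
  rw [← integral_mul_log_mul_prod_of_marginals hq hr measurable_fst (fun _ => measurable_snd.eval)
    hp.measurable hp.nonneg (fun i => (hg i).measurable) hgpos hqlog hrlog]
  refine integral_mul_log_le_integral_mul_log hp hqg ?_ hplog
    (integrable_mul_log_mul_prod_of_marginals hq hr measurable_fst (fun _ => measurable_snd.eval)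
      hp.measurable hp.nonneg (fun i => (hg i).measurable) hgpos hqlog hrlog)
  filter_upwards [hq.ae_eq_zero_of_eq_zero measurable_fst hp.measurable hp.nonneg] with w hw hw0
  exact hw ((mul_eq_zero.1 hw0).resolve_right (Finset.prod_pos fun i _ => hgpos i _).ne')

end ProductDensity

section Canonical

variable {Y : Type*} [MeasurableSpace Y] {ν : Measure Y} {H r : Y → ℝ} {β Z : ℝ}

theorem isProbabilityDensity_canonical (hH : Measurable H) (hZ : Z = ∫ y, exp (-β * H y) ∂ν)
    (hZpos : 0 < Z) : IsProbabilityDensity ν fun y => Z⁻¹ * exp (-β * H y) where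
  measurable := (hH.const_mul (-β)).exp.const_mul _
  nonneg y := by positivity
  integral_eq_one := by rw [integral_const_mul, ← hZ, inv_mul_cancel₀ hZpos.ne']

theorem log_inv_mul_exp (hZ : Z ≠ 0) (x : ℝ) : log (Z⁻¹ * exp x) = -log Z + x := by
  rw [log_mul (inv_ne_zero hZ) (exp_ne_zero x), log_inv, log_exp]

theorem integrable_mul_log_canonical (hZ : Z ≠ 0) (hr : Integrable r ν)
    (hHr : Integrable (fun y => H y * r y) ν) :
    Integrable (fun y => r y * log (Z⁻¹ * exp (-β * H y))) ν := by
  simp_rw [log_inv_mul_exp hZ, mul_add, mul_comm (r _) (-β * _), mul_assoc]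
  exact (hr.mul_const _).add (hHr.const_mul _)

theorem integral_mul_log_canonical (hZ : Z ≠ 0) (hr : IsProbabilityDensity ν r)
    (hHr : Integrable (fun y => H y * r y) ν) :
    ∫ y, r y * log (Z⁻¹ * exp (-β * H y)) ∂ν = -log Z - β * ∫ y, H y * r y ∂ν := by
  simp_rw [log_inv_mul_exp hZ, mul_add, mul_comm (r _) (-β * _), mul_assoc]
  rw [integral_add (hr.integrable.mul_const _) (hHr.const_mul _), integral_mul_const,
    integral_const_mul, hr.integral_eq_one]
  ring

end Canonical

theorem fundamental_theorem_statistical_mechanics_general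
    {X : Type*} [MeasurableSpace X] (μ : Measure X) [SigmaFinite μ]
    (m : ℕ) {Y : Fin m → Type*} [∀ i, MeasurableSpace (Y i)]
    (ν : ∀ i, Measure (Y i)) [∀ i, SigmaFinite (ν i)]
    (H : ∀ i, Y i → ℝ) (hH : ∀ i, Measurable (H i))
    (β : Fin m → ℝ)
    (Z : Fin m → ℝ) (hZ : ∀ i, Z i = ∫ y, Real.exp (-β i * H i y) ∂(ν i))
    (hZpos : ∀ i, 0 < Z i)
    (g : ∀ i, Y i → ℝ) (hg : ∀ i, g i = fun y => (Z i)⁻¹ * Real.exp (-β i * H i y))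
    -- the initial density of the system A
    (fA : X → ℝ) (hfAm : Measurable fA) (hfA0 : ∀ x, 0 ≤ fA x)
    (hfA1 : (∫ x, fA x ∂μ) = 1)
    -- initial joint density: product (no initial correlations)
    (f₀ : X × (∀ i, Y i) → ℝ) (hf₀ : f₀ = fun w => fA w.1 * ∏ i, g i (w.2 i))
    -- Hamiltonian evolution: a measure-preserving measurable equivalence
    (Φ : (X × (∀ i, Y i)) ≃ᵐ (X × (∀ i, Y i)))
    (hΦ : MeasurePreserving Φ (μ.prod (Measure.pi ν)) (μ.prod (Measure.pi ν)))
    (f₁ : X × (∀ i, Y i) → ℝ) (hf₁ : f₁ = fun w => f₀ (Φ.symm w))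
    -- final marginal density of the system A
    (fA' : X → ℝ) (hfA'm : Measurable fA') (hfA'0 : ∀ x, 0 ≤ fA' x)
    (hfA'marg : ∀ s : Set X, MeasurableSet s →
      (∫ x in s, fA' x ∂μ) =
        ∫ w, s.indicator (fun _ => (1 : ℝ)) w.1 * f₁ w ∂(μ.prod (Measure.pi ν)))
    -- final marginal densities of the reservoirs
    (g' : ∀ i, Y i → ℝ) (hg'm : ∀ i, Measurable (g' i)) (hg'0 : ∀ i y, 0 ≤ g' i y)
    (hg'marg : ∀ i, ∀ s : Set (Y i), MeasurableSet s →
      (∫ y in s, g' i y ∂(ν i)) =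
        ∫ w, s.indicator (fun _ => (1 : ℝ)) (w.2 i) * f₁ w ∂(μ.prod (Measure.pi ν)))
    -- finiteness of the entropy integrals
    (hSfA : Integrable (fun x => fA x * Real.log (fA x)) μ)
    (hSfA' : Integrable (fun x => fA' x * Real.log (fA' x)) μ)
    (hSf₁ : Integrable (fun w => f₁ w * Real.log (f₁ w)) (μ.prod (Measure.pi ν)))
    -- finiteness of the energy integrals
    (hEg : ∀ i, Integrable (fun y => H i y * g i y) (ν i))
    (hEg' : ∀ i, Integrable (fun y => H i y * g' i y) (ν i))
    -- expected heat gained by the system from reservoir i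
    (Q : Fin m → ℝ)
    (hQ : ∀ i, Q i = (∫ y, H i y * g i y ∂(ν i)) - ∫ y, H i y * g' i y ∂(ν i)) :
    ∑ i, β i * Q i ≤
      (-∫ x, fA' x * Real.log (fA' x) ∂μ) - (-∫ x, fA x * Real.log (fA x) ∂μ) := by
  obtain rfl : g = fun i y => (Z i)⁻¹ * exp (-β i * H i y) := funext hg
  subst hf₀ hf₁
  have hgd (i : Fin m) := isProbabilityDensity_canonical (hH i) (hZ i) (hZpos i)
  have hgpos (i : Fin m) (y : Y i) : 0 < (Z i)⁻¹ * exp (-β i * H i y) :=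
    mul_pos (inv_pos.2 (hZpos i)) (exp_pos _)
  have hfAd : IsProbabilityDensity μ fA := ⟨hfAm, hfA0, hfA1⟩
  have hΦ' := hΦ.symm Φ
  have hf₁d := (hfAd.prod_pi hgd).comp_measurePreserving hΦ' Φ.symm.measurableEmbedding
  have hmargA := isMarginalDensity_of_setIntegral_eq measurable_fst hf₁d hfA'm hfA'0 hfA'marg
  have hmargB (i : Fin m) :=
    isMarginalDensity_of_setIntegral_eq measurable_snd.eval hf₁d (hg'm i) (hg'0 i) (hg'marg i)
  have hg'd (i : Fin m) := (hmargB i).isProbabilityDensity measurable_snd.eval hf₁d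
  have hS₀ := integral_mul_log_prod_pi hfAd hgd hgpos hSfA fun i =>
    integrable_mul_log_canonical (hZpos i).ne' (hgd i).integrable (hEg i)
  have hS₁ := integral_mul_log_ge_of_marginals hf₁d hmargA hmargB hgd hgpos hSf₁ hSfA' fun i =>
    integrable_mul_log_canonical (hZpos i).ne' (hg'd i).integrable (hEg' i)
  have hS₁₀ := integral_mul_log_comp_measurePreserving hΦ' Φ.symm.measurableEmbedding
    fun w => fA w.1 * ∏ i, (Z i)⁻¹ * exp (-β i * H i (w.2 i))
  have key := (hS₁.trans_eq hS₁₀).trans_eq hS₀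
  have hE (i : Fin m) := integral_mul_log_canonical (β := β i) (hZpos i).ne' (hgd i) (hEg i)
  have hE' (i : Fin m) := integral_mul_log_canonical (β := β i) (hZpos i).ne' (hg'd i) (hEg' i)
  simp only [hE, hE', hQ, mul_sub, Finset.sum_sub_distrib] at key ⊢
  linarith

/-- Fundamental Theorem of Statistical Mechanics (classical version): a system `A` with
density `f_A`, initially uncorrelated with reservoirs `B i` having canonical densities
`g i = Z i⁻¹ e^{-β i • H i}`, evolves jointly by a measure-preserving equivalence `Φ`.
With `Q i` the expected heat gained from reservoir `i` (decrease of `⟨H i⟩`), and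
marginals `fA'`, `g' i` of the final joint density, one has
`∑ i, β i * Q i ≤ S[fA'] - S[fA]`, where `S[f] = -∫ f log f`. -/
theorem fundamental_theorem_statistical_mechanics
    {X : Type*} [MeasurableSpace X] (μ : Measure X) [SigmaFinite μ]
    (m : ℕ) {Y : Fin m → Type*} [∀ i, MeasurableSpace (Y i)]
    (ν : ∀ i, Measure (Y i)) [∀ i, SigmaFinite (ν i)]
    (H : ∀ i, Y i → ℝ) (hH : ∀ i, Measurable (H i))
    (β : Fin m → ℝ) (hβ : ∀ i, 0 < β i)
    (hexp : ∀ i, Integrable (fun y => Real.exp (-β i * H i y)) (ν i))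
    (Z : Fin m → ℝ) (hZ : ∀ i, Z i = ∫ y, Real.exp (-β i * H i y) ∂(ν i))
    (hZpos : ∀ i, 0 < Z i)
    (g : ∀ i, Y i → ℝ) (hg : ∀ i, g i = fun y => (Z i)⁻¹ * Real.exp (-β i * H i y))
    -- the initial density of the system A
    (fA : X → ℝ) (hfAm : Measurable fA) (hfA0 : ∀ x, 0 ≤ fA x)
    (hfAi : Integrable fA μ) (hfA1 : (∫ x, fA x ∂μ) = 1)
    -- initial joint density: product (no initial correlations)
    (f₀ : X × (∀ i, Y i) → ℝ) (hf₀ : f₀ = fun w => fA w.1 * ∏ i, g i (w.2 i))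
    -- Hamiltonian evolution: a measure-preserving measurable equivalence
    (Φ : (X × (∀ i, Y i)) ≃ᵐ (X × (∀ i, Y i)))
    (hΦ : MeasurePreserving Φ (μ.prod (Measure.pi ν)) (μ.prod (Measure.pi ν)))
    (f₁ : X × (∀ i, Y i) → ℝ) (hf₁ : f₁ = fun w => f₀ (Φ.symm w))
    -- final marginal density of the system A
    (fA' : X → ℝ) (hfA'm : Measurable fA') (hfA'0 : ∀ x, 0 ≤ fA' x)
    (hfA'marg : ∀ s : Set X, MeasurableSet s →
      (∫ x in s, fA' x ∂μ) =
        ∫ w, s.indicator (fun _ => (1 : ℝ)) w.1 * f₁ w ∂(μ.prod (Measure.pi ν)))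
    -- final marginal densities of the reservoirs
    (g' : ∀ i, Y i → ℝ) (hg'm : ∀ i, Measurable (g' i)) (hg'0 : ∀ i y, 0 ≤ g' i y)
    (hg'marg : ∀ i, ∀ s : Set (Y i), MeasurableSet s →
      (∫ y in s, g' i y ∂(ν i)) =
        ∫ w, s.indicator (fun _ => (1 : ℝ)) (w.2 i) * f₁ w ∂(μ.prod (Measure.pi ν)))
    -- finiteness of the entropy integrals
    (hSfA : Integrable (fun x => fA x * Real.log (fA x)) μ)
    (hSfA' : Integrable (fun x => fA' x * Real.log (fA' x)) μ)
    (hSg : ∀ i, Integrable (fun y => g i y * Real.log (g i y)) (ν i))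
    (hSg' : ∀ i, Integrable (fun y => g' i y * Real.log (g' i y)) (ν i))
    (hSf₁ : Integrable (fun w => f₁ w * Real.log (f₁ w)) (μ.prod (Measure.pi ν)))
    -- finiteness of the energy integrals
    (hEg : ∀ i, Integrable (fun y => H i y * g i y) (ν i))
    (hEg' : ∀ i, Integrable (fun y => H i y * g' i y) (ν i))
    -- expected heat gained by the system from reservoir i
    (Q : Fin m → ℝ)
    (hQ : ∀ i, Q i = (∫ y, H i y * g i y ∂(ν i)) - ∫ y, H i y * g' i y ∂(ν i)) :
    ∑ i, β i * Q i ≤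
      (-∫ x, fA' x * Real.log (fA' x) ∂μ) - (-∫ x, fA x * Real.log (fA x) ∂μ) :=
  fundamental_theorem_statistical_mechanics_general μ m ν H hH β Z hZ hZpos g hg fA hfAm hfA0 hfA1
    f₀ hf₀ Φ hΦ f₁ hf₁ fA' hfA'm hfA'0 hfA'marg g' hg'm hg'0 hg'marg hSfA hSfA' hSf₁ hEg hEg' Q hQ
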